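/- arXiv:2409.15571 — 2 statements merged into one kernel-verified Lean document; each statement's English description precedes it below -/
import Mathlib

section
/- There is no λ ∈ ℂ and nonzero φ ∈ H^3(−∞,0) satisfying λφ + φ' + φ''' = 0 on (−∞,0) with φ(0) = φ'(0) = 0. -/
/-!
Pair the equation `λφ + φ' + φ''' = 0` in `L²(-∞, 0)` with `φ` and with `φ''` and integrate by
parts: the boundary terms at `-∞` vanish, and those at `0` are controlled by `φ(0) = φ'(0) = 0`.
The real part of the first identity gives `Re λ · ‖φ‖² = 0`, so `Re λ = 0`; the real part of the
second then gives `|φ''(0)|² = -2 Re λ · ‖φ'‖² = 0`. Since `φ(0) = φ'(0) = φ''(0) = 0`, uniqueness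
for the linear ODE forces `φ = 0` on `(-∞, 0]`.
-/

open MeasureTheory Set Filter Complex Topology ComplexConjugate

theorem integrable_mul_conj_of_memLp {α : Type*} [MeasurableSpace α] {μ : Measure α}
    {f g : α → ℂ} (hf : MemLp f 2 μ) (hg : MemLp g 2 μ) :
    Integrable (fun x => f x * conj (g x)) μ :=
  hf.integrable_mul hg.star

theorem ContDiff.hasDerivAt_iteratedDeriv {𝕜 F : Type*} [NontriviallyNormedField 𝕜]
    [NormedAddCommGroup F] [NormedSpace 𝕜 F] {f : 𝕜 → F} {n k : ℕ} (hf : ContDiff 𝕜 n f)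
    (hk : k < n) (x : 𝕜) : HasDerivAt (iteratedDeriv k f) (iteratedDeriv (k + 1) f x) x := by
  rw [iteratedDeriv_succ]
  exact ((hf.differentiable_iteratedDeriv k (by exact_mod_cast hk)) x).hasDerivAt

noncomputable def halfLineInner (f g : ℝ → ℂ) : ℂ :=
  ∫ x in Iio (0 : ℝ), f x * conj (g x)

theorem halfLineInner_swap (f g : ℝ → ℂ) : halfLineInner g f = conj (halfLineInner f g) := by
  rw [halfLineInner, halfLineInner, ← integral_conj]
  simp only [map_mul, conj_conj, mul_comm]

theorem halfLineInner_self (f : ℝ → ℂ) :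
    halfLineInner f f = ((∫ x in Iio (0 : ℝ), ‖f x‖ ^ 2 : ℝ) : ℂ) := by
  rw [halfLineInner, ← integral_complex_ofReal]
  simp only [mul_conj', ofReal_pow]

theorem im_halfLineInner_self (f : ℝ → ℂ) : (halfLineInner f f).im = 0 := by
  rw [halfLineInner_self, ofReal_im]

theorem re_halfLineInner_self_pos {f : ℝ → ℂ} (hf : Continuous f)
    (hL : MemLp f 2 (volume.restrict (Iio 0))) (hne : ∃ x < 0, f x ≠ 0) :
    0 < (halfLineInner f f).re := by
  obtain ⟨x₀, hx₀, hfx₀⟩ := hne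
  rw [halfLineInner_self, ofReal_re, setIntegral_pos_iff_support_of_nonneg_ae
    (.of_forall fun x => by positivity) ((memLp_two_iff_integrable_sq_norm hL.1).mp hL)]
  have hopen : IsOpen ({x | f x ≠ 0} ∩ Iio 0) :=
    (isOpen_compl_singleton.preimage hf).inter isOpen_Iio
  refine (hopen.measure_pos volume ⟨x₀, hfx₀, hx₀⟩).trans_le (measure_mono ?_)
  rintro x ⟨hfx, hx⟩
  exact ⟨by simpa using hfx, hx⟩

theorem halfLineInner_add_left {f g h : ℝ → ℂ} (hf : MemLp f 2 (volume.restrict (Iio 0)))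
    (hg : MemLp g 2 (volume.restrict (Iio 0))) (hh : MemLp h 2 (volume.restrict (Iio 0))) :
    halfLineInner (f + g) h = halfLineInner f h + halfLineInner g h := by
  simp only [halfLineInner, Pi.add_apply, add_mul]
  exact integral_add (integrable_mul_conj_of_memLp hf hh) (integrable_mul_conj_of_memLp hg hh)

theorem halfLineInner_smul_left (c : ℂ) (f g : ℝ → ℂ) :
    halfLineInner (c • f) g = c * halfLineInner f g := by
  simp only [halfLineInner, Pi.smul_apply, smul_eq_mul, mul_assoc, integral_const_mul]

theorem halfLineInner_eq_zero_of_eqOn {f : ℝ → ℂ} (hf : EqOn f 0 (Iio 0)) (g : ℝ → ℂ) :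
    halfLineInner f g = 0 := by
  rw [halfLineInner, setIntegral_congr_fun measurableSet_Iio (g := fun _ => 0)
    fun x hx => by simp [hf hx], integral_zero]

/-- The boundary term at `-∞` vanishes because `f * conj g` and its derivative are integrable. -/
theorem halfLineInner_deriv_add {f f' g g' : ℝ → ℂ}
    (hf : ∀ x, HasDerivAt f (f' x) x) (hg : ∀ x, HasDerivAt g (g' x) x)
    (hfL : MemLp f 2 (volume.restrict (Iio 0))) (hf'L : MemLp f' 2 (volume.restrict (Iio 0)))
    (hgL : MemLp g 2 (volume.restrict (Iio 0))) (hg'L : MemLp g' 2 (volume.restrict (Iio 0))) :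
    halfLineInner f' g + halfLineInner f g' = f 0 * conj (g 0) := by
  have hderiv (x : ℝ) : HasDerivAt (fun x => f x * conj (g x))
      (f' x * conj (g x) + f x * conj (g' x)) x := (hf x).mul (hg x).star
  have hint : IntegrableOn (fun x => f' x * conj (g x) + f x * conj (g' x)) (Iic 0) :=
    IntegrableOn.congr_set_ae ((integrable_mul_conj_of_memLp hf'L hgL).add
      (integrable_mul_conj_of_memLp hfL hg'L)) Iio_ae_eq_Iic.symm
  have hbot : Tendsto (fun x => f x * conj (g x)) atBot (𝓝 0) :=
    tendsto_zero_of_hasDerivAt_of_integrableOn_Iic (fun x _ => hderiv x) hint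
      (IntegrableOn.congr_set_ae (integrable_mul_conj_of_memLp hfL hgL) Iio_ae_eq_Iic.symm)
  rw [halfLineInner, halfLineInner, ← integral_add (integrable_mul_conj_of_memLp hf'L hgL)
    (integrable_mul_conj_of_memLp hfL hg'L), setIntegral_congr_set Iio_ae_eq_Iic,
    integral_Iic_of_hasDerivAt_of_tendsto' (fun x _ => hderiv x) hint hbot, sub_zero]

theorem two_mul_re_halfLineInner_deriv_self {f f' : ℝ → ℂ} (hf : ∀ x, HasDerivAt f (f' x) x)
    (hfL : MemLp f 2 (volume.restrict (Iio 0))) (hf'L : MemLp f' 2 (volume.restrict (Iio 0))) :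
    2 * (halfLineInner f' f).re = normSq (f 0) := by
  have := congrArg re (halfLineInner_deriv_add hf hf hfL hf'L hfL hf'L)
  rw [halfLineInner_swap f' f, add_re, conj_re, mul_conj, ofReal_re] at this
  linarith

noncomputable def companion (lam : ℂ) : ℂ × ℂ × ℂ →L[ℂ] ℂ × ℂ × ℂ :=
  LinearMap.toContinuousLinearMap
    { toFun := fun p => (p.2.1, p.2.2, -(lam * p.1 + p.2.1))
      map_add' := fun p q => by ext <;> simp only [Prod.fst_add, Prod.snd_add]; ring
      map_smul' := fun c p => by
        ext <;> simp only [Prod.smul_fst, Prod.smul_snd, smul_eq_mul, RingHom.id_apply]; ring }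

theorem eqOn_zero_of_ode {lam : ℂ} {φ : ℝ → ℂ} (hC : ContDiff ℝ 3 φ)
    (hode : ∀ x < 0, lam * φ x + deriv φ x + iteratedDeriv 3 φ x = 0)
    (h0 : φ 0 = 0) (h1 : deriv φ 0 = 0) (h2 : iteratedDeriv 2 φ 0 = 0) : EqOn φ 0 (Iic 0) := by
  have hode' : EqOn (fun x => lam * φ x + deriv φ x + iteratedDeriv 3 φ x) 0 (Iic 0) := by
    rw [← closure_Iio]
    exact EqOn.closure hode ((continuous_const.mul hC.continuous).add
      (hC.continuous_deriv (by norm_num)) |>.add (hC.continuous_iteratedDeriv 3 le_rfl))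
      continuous_const
  set Y : ℝ → ℂ × ℂ × ℂ := fun x => (φ x, deriv φ x, iteratedDeriv 2 φ x)
  have hY : ∀ x ≤ 0, HasDerivAt Y (companion lam (Y x)) x := by
    intro x hx
    have d0 : HasDerivAt φ (deriv φ x) x := by
      simpa using hC.hasDerivAt_iteratedDeriv (k := 0) (by norm_num) x
    have d1 : HasDerivAt (deriv φ) (iteratedDeriv 2 φ x) x := by
      simpa using hC.hasDerivAt_iteratedDeriv (k := 1) (by norm_num) x
    have d2 : HasDerivAt (iteratedDeriv 2 φ) (-(lam * φ x + deriv φ x)) x := by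
      have h3 : lam * φ x + deriv φ x + iteratedDeriv 3 φ x = 0 := hode' hx
      rw [show -(lam * φ x + deriv φ x) = iteratedDeriv 3 φ x by linear_combination -h3]
      simpa using hC.hasDerivAt_iteratedDeriv (k := 2) (by norm_num) x
    exact d0.prodMk (d1.prodMk d2)
  intro x hx
  have hYx := ODE_solution_unique_of_mem_Icc_left (v := fun _ => companion lam) (s := fun _ => univ)
    (g := fun _ => 0)
    (fun _ _ => (companion lam).lipschitz.lipschitzOnWith)
    (HasDerivAt.continuousOn fun t ht => hY t ht.2) (fun t ht => (hY t ht.2).hasDerivWithinAt)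
    (fun _ _ => mem_univ _) continuousOn_const
    (fun t _ => by rw [map_zero]; exact hasDerivWithinAt_const t _ 0)
    (fun _ _ => mem_univ _) (by simp [Y, h0, h1, h2]) ⟨le_rfl, hx⟩
  exact congrArg Prod.fst hYx

structure IsH3Solution (lam : ℂ) (φ : ℝ → ℂ) : Prop where
  contDiff : ContDiff ℝ 3 φ
  memLp : ∀ k ≤ 3, MemLp (iteratedDeriv k φ) 2 (volume.restrict (Iio 0))
  ode : ∀ x < 0, lam * φ x + deriv φ x + iteratedDeriv 3 φ x = 0

namespace IsH3Solution

variable {lam : ℂ} {φ : ℝ → ℂ}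

theorem halfLineInner_succ_add (h : IsH3Solution lam φ) {i j : ℕ} (hi : i < 3) (hj : j < 3) :
    halfLineInner (iteratedDeriv (i + 1) φ) (iteratedDeriv j φ) +
      halfLineInner (iteratedDeriv i φ) (iteratedDeriv (j + 1) φ) =
      iteratedDeriv i φ 0 * conj (iteratedDeriv j φ 0) :=
  halfLineInner_deriv_add (h.contDiff.hasDerivAt_iteratedDeriv hi)
    (h.contDiff.hasDerivAt_iteratedDeriv hj) (h.memLp i (by omega)) (h.memLp (i + 1) hi)
    (h.memLp j (by omega)) (h.memLp (j + 1) hj)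

theorem two_mul_re_halfLineInner_succ_self (h : IsH3Solution lam φ) {k : ℕ} (hk : k < 3) :
    2 * (halfLineInner (iteratedDeriv (k + 1) φ) (iteratedDeriv k φ)).re =
      normSq (iteratedDeriv k φ 0) :=
  two_mul_re_halfLineInner_deriv_self (h.contDiff.hasDerivAt_iteratedDeriv hk)
    (h.memLp k (by omega)) (h.memLp (k + 1) hk)

theorem re_halfLineInner_succ_self_eq_zero (h : IsH3Solution lam φ) {k : ℕ} (hk : k < 3)
    (h0 : iteratedDeriv k φ 0 = 0) :
    (halfLineInner (iteratedDeriv (k + 1) φ) (iteratedDeriv k φ)).re = 0 := by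
  simpa [h0] using h.two_mul_re_halfLineInner_succ_self hk

theorem halfLineInner_ode (h : IsH3Solution lam φ) {k : ℕ} (hk : k ≤ 3) :
    lam * halfLineInner φ (iteratedDeriv k φ) + halfLineInner (deriv φ) (iteratedDeriv k φ) +
      halfLineInner (iteratedDeriv 3 φ) (iteratedDeriv k φ) = 0 := by
  have hL0 : MemLp φ 2 (volume.restrict (Iio 0)) := by simpa using h.memLp 0 (by norm_num)
  have hL1 : MemLp (deriv φ) 2 (volume.restrict (Iio 0)) := by
    simpa using h.memLp 1 (by norm_num)
  have hLk := h.memLp k hk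
  rw [← halfLineInner_smul_left, ← halfLineInner_add_left (hL0.const_smul lam) hL1 hLk,
    ← halfLineInner_add_left ((hL0.const_smul lam).add hL1) (h.memLp 3 le_rfl) hLk]
  exact halfLineInner_eq_zero_of_eqOn (fun x hx => h.ode x hx) _

theorem re_eq_zero (h : IsH3Solution lam φ) (h0 : φ 0 = 0) (h1 : deriv φ 0 = 0)
    (hne : ∃ x < 0, φ x ≠ 0) : lam.re = 0 := by
  have h10 : (halfLineInner (deriv φ) φ).re = 0 := by
    simpa using h.re_halfLineInner_succ_self_eq_zero (k := 0) (by norm_num) (by simpa using h0)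
  have h21 : (halfLineInner (iteratedDeriv 2 φ) (deriv φ)).re = 0 := by
    simpa using h.re_halfLineInner_succ_self_eq_zero (k := 1) (by norm_num) (by simpa using h1)
  have h30 : halfLineInner (iteratedDeriv 3 φ) φ =
      -halfLineInner (iteratedDeriv 2 φ) (deriv φ) := by
    have := h.halfLineInner_succ_add (i := 2) (j := 0) (by norm_num) (by norm_num)
    simp only [Nat.reduceAdd, iteratedDeriv_zero, iteratedDeriv_one, h0, map_zero,
      mul_zero] at this
    linear_combination this
  have hode := congrArg re (h.halfLineInner_ode (k := 0) (by norm_num))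
  rw [iteratedDeriv_zero, h30] at hode
  have hre : lam.re * (halfLineInner φ φ).re = 0 := by
    simpa [mul_re, im_halfLineInner_self, h10, h21] using hode
  exact (mul_eq_zero.mp hre).resolve_right (re_halfLineInner_self_pos h.contDiff.continuous
    (by simpa using h.memLp 0 (by norm_num)) hne).ne'

theorem iteratedDeriv_two_eq_zero (h : IsH3Solution lam φ) (h0 : φ 0 = 0) (h1 : deriv φ 0 = 0)
    (hre : lam.re = 0) : iteratedDeriv 2 φ 0 = 0 := by
  have h21 : (halfLineInner (iteratedDeriv 2 φ) (deriv φ)).re = 0 := by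
    simpa using h.re_halfLineInner_succ_self_eq_zero (k := 1) (by norm_num) (by simpa using h1)
  have h32 := h.two_mul_re_halfLineInner_succ_self (k := 2) (by norm_num)
  have h02 : halfLineInner φ (iteratedDeriv 2 φ) = -halfLineInner (deriv φ) (deriv φ) := by
    have := h.halfLineInner_succ_add (i := 0) (j := 1) (by norm_num) (by norm_num)
    simp only [Nat.reduceAdd, iteratedDeriv_zero, iteratedDeriv_one, h0, zero_mul] at this
    linear_combination this
  have hode := congrArg re (h.halfLineInner_ode (k := 2) (by norm_num))
  rw [h02, halfLineInner_swap (iteratedDeriv 2 φ) (deriv φ)] at hode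
  simp only [add_re, mul_re, neg_re, neg_im, hre, conj_re, h21, im_halfLineInner_self,
    zero_re] at hode
  exact normSq_eq_zero.mp (by linarith)

end IsH3Solution

/-- There is no `λ ∈ ℂ` and nonzero `φ ∈ H³(−∞,0)` satisfying
`λφ + φ' + φ''' = 0` on `(−∞,0)` with `φ(0) = φ'(0) = 0`. -/
theorem stmt_3 :
    ¬ ∃ (lam : ℂ) (φ : ℝ → ℂ),
        ContDiff ℝ 3 φ ∧
        MemLp φ 2 (volume.restrict (Iio (0:ℝ))) ∧
        MemLp (deriv φ) 2 (volume.restrict (Iio (0:ℝ))) ∧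
        MemLp (iteratedDeriv 2 φ) 2 (volume.restrict (Iio (0:ℝ))) ∧
        MemLp (iteratedDeriv 3 φ) 2 (volume.restrict (Iio (0:ℝ))) ∧
        (∀ x < (0:ℝ), lam * φ x + deriv φ x + iteratedDeriv 3 φ x = 0) ∧
        φ 0 = 0 ∧ deriv φ 0 = 0 ∧
        (∃ x ≤ (0:ℝ), φ x ≠ 0) := by
  rintro ⟨lam, φ, hC, hL0, hL1, hL2, hL3, hode, h0, h1, x₀, hx₀, hφx₀⟩
  have hx₀_neg : x₀ < 0 := hx₀.lt_of_ne (by rintro rfl; exact hφx₀ h0)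
  have h : IsH3Solution lam φ := ⟨hC, fun k hk => by interval_cases k <;> simpa, hode⟩
  have hre : lam.re = 0 := h.re_eq_zero h0 h1 ⟨x₀, hx₀_neg, hφx₀⟩
  exact hφx₀ (eqOn_zero_of_ode hC hode h0 h1 (h.iteratedDeriv_two_eq_zero h0 h1 hre) hx₀)
end

section
/- The Airy function A(x) = (1/2π) ∫_ℝ e^{ixξ} e^{iξ³} dξ (interpreted as an improper/oscillatory integral) satisfies A(0) = 1/(3 Γ(2/3)). -/
open MeasureTheory Set Filter intervalIntegral Real

lemma meas_aux : Measurable (fun u : ℝ => u ^ (2/3 : ℝ) / (1 + u^2)) := by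
  fun_prop

lemma int_K : IntegrableOn (fun u : ℝ => u ^ (2/3 : ℝ) / (1 + u^2)) (Ioi 0) := by
  have h1 : IntegrableOn (fun u : ℝ => u ^ (2/3 : ℝ) / (1 + u^2)) (Ioc 0 1) := by
    refine Integrable.mono' (g := fun _ => (1:ℝ)) ?_ ?_ ?_
    · exact integrableOn_const (by simp)
    · exact (meas_aux.aestronglyMeasurable).restrict
    · filter_upwards [ae_restrict_mem measurableSet_Ioc] with u hu
      rw [Real.norm_eq_abs, abs_of_nonneg (div_nonneg (Real.rpow_nonneg hu.1.le _) (by positivity))]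
      have h2 : u ^ (2/3:ℝ) ≤ 1 := by
        calc u ^ (2/3:ℝ) ≤ 1 ^ (2/3:ℝ) := Real.rpow_le_rpow hu.1.le hu.2 (by norm_num)
        _ = 1 := Real.one_rpow _
      have h3 : (1:ℝ) ≤ 1 + u^2 := by nlinarith
      calc u ^ (2/3:ℝ) / (1 + u^2) ≤ u ^ (2/3:ℝ) / 1 :=
            div_le_div_of_nonneg_left (Real.rpow_nonneg hu.1.le _) one_pos h3
        _ ≤ 1 := by simpa using h2
  have h2 : IntegrableOn (fun u : ℝ => u ^ (2/3 : ℝ) / (1 + u^2)) (Ioi 1) := by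
    refine Integrable.mono' (g := fun u => u ^ (-4/3 : ℝ)) ?_ ?_ ?_
    · exact integrableOn_Ioi_rpow_of_lt (by norm_num) one_pos
    · exact (meas_aux.aestronglyMeasurable).restrict
    · filter_upwards [ae_restrict_mem measurableSet_Ioi] with u hu
      have hu0 : (0:ℝ) < u := lt_trans one_pos hu
      rw [Real.norm_eq_abs, abs_of_nonneg (div_nonneg (Real.rpow_nonneg hu0.le _) (by positivity))]
      have h3 : u^2 ≤ 1 + u^2 := by nlinarith
      calc u ^ (2/3:ℝ) / (1 + u^2) ≤ u ^ (2/3:ℝ) / u^2 :=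
            div_le_div_of_nonneg_left (Real.rpow_nonneg hu0.le _) (by positivity) h3
        _ = u ^ (-4/3 : ℝ) := by
            rw [← Real.rpow_natCast u 2, ← Real.rpow_sub hu0]
            norm_num
  have := h1.union h2
  rwa [Set.Ioc_union_Ioi_eq_Ioi zero_le_one] at this

lemma exp_int (c : ℝ) (hc : 0 < c) : ∫ s in Ioi (0:ℝ), rexp (-(c * s)) = 1 / c := by
  have h := integral_rpow_mul_exp_neg_mul_Ioi (a := 1) one_pos hc
  simp only [sub_self, Real.rpow_zero, one_mul, Real.rpow_one, Real.Gamma_one, mul_one] at h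
  simpa using h

lemma K_val : ∫ u in Ioi (0:ℝ), u ^ (2/3 : ℝ) / (1 + u^2) = π := by
  set μ := volume.restrict (Ioi (0:ℝ))
  set g : ℝ → ℝ → ℝ := fun u s => u ^ (2/3 : ℝ) * rexp (-((1 + u^2) * s)) with hgdef
  have hmeas : AEStronglyMeasurable (Function.uncurry g) (μ.prod μ) := by
    apply Measurable.aestronglyMeasurable
    fun_prop
  have hpos : ∀ u : ℝ, (0:ℝ) < 1 + u^2 := fun u => by positivity
  have hint_s : ∀ u : ℝ, Integrable (fun s => g u s) μ := by
    intro u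
    exact ((exp_neg_integrableOn_Ioi 0 (hpos u)).congr_fun
      (fun s _ => by rw [neg_mul]) measurableSet_Ioi).const_mul _
  have hinner : ∀ u : ℝ, 0 ≤ u → ∫ s, g u s ∂μ = u ^ (2/3:ℝ) / (1 + u^2) := by
    intro u hu
    simp only [hgdef]
    rw [MeasureTheory.integral_const_mul, exp_int _ (hpos u)]
    ring
  have hg : Integrable (Function.uncurry g) (μ.prod μ) := by
    rw [MeasureTheory.integrable_prod_iff hmeas]
    constructor
    · exact Eventually.of_forall hint_s
    · apply (int_K.congr ?_)
      filter_upwards [ae_restrict_mem measurableSet_Ioi] with u hu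
      have : ∀ s : ℝ, ‖g u s‖ = g u s := by
        intro s
        rw [Real.norm_eq_abs, abs_of_nonneg]
        exact mul_nonneg (Real.rpow_nonneg (le_of_lt hu) _) (Real.exp_nonneg _)
      simp only [Function.uncurry_apply_pair, this]
      exact (hinner u hu.le).symm
  have hswap := MeasureTheory.integral_integral_swap hg
  -- LHS of swap
  have hL : ∫ u, ∫ s, g u s ∂μ ∂μ = ∫ u in Ioi (0:ℝ), u ^ (2/3 : ℝ) / (1 + u^2) := by
    apply setIntegral_congr_fun measurableSet_Ioi
    intro u hu
    exact hinner u (le_of_lt hu)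
  -- RHS of swap
  have hR : ∫ s, ∫ u, g u s ∂μ ∂μ = (1/2) * Real.Gamma (5/6) * Real.Gamma (1/6) := by
    have hstep : ∀ s : ℝ, s ∈ Ioi (0:ℝ) →
        ∫ u, g u s ∂μ = rexp (-s) * (s ^ (-(5:ℝ)/6) * (1/2) * Real.Gamma (5/6)) := by
      intro s hs
      have h1 : ∀ u : ℝ, u ∈ Ioi (0:ℝ) →
          g u s = rexp (-s) * (u ^ (2/3:ℝ) * rexp (-s * u ^ (2:ℝ))) := by
        intro u hu
        simp only [hgdef]
        rw [Real.rpow_two, show -((1+u^2)*s) = -s + -(s*u^2) by ring, Real.exp_add]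
        ring
      rw [setIntegral_congr_fun measurableSet_Ioi h1, MeasureTheory.integral_const_mul,
        integral_rpow_mul_exp_neg_mul_rpow two_pos (by norm_num) hs]
      norm_num
    rw [setIntegral_congr_fun measurableSet_Ioi hstep]
    have hGamma : Real.Gamma (1/6) = ∫ x in Ioi (0:ℝ), rexp (-x) * x ^ (-(5:ℝ)/6) := by
      rw [Real.Gamma_eq_integral (by norm_num : (0:ℝ) < 1/6)]
      norm_num
    rw [show (fun s : ℝ => rexp (-s) * (s ^ (-(5:ℝ)/6) * (1/2) * Real.Gamma (5/6)))
        = (fun s : ℝ => (rexp (-s) * s ^ (-(5:ℝ)/6)) * ((1/2) * Real.Gamma (5/6))) by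
        funext s; ring]
    rw [MeasureTheory.integral_mul_const, ← hGamma]
    ring
  rw [hL, hR] at hswap
  rw [hswap]
  have hrefl := Real.Gamma_mul_Gamma_one_sub (1/6)
  rw [show (1:ℝ) - 1/6 = 5/6 by norm_num, show π * (1/6) = π/6 by ring,
    Real.sin_pi_div_six] at hrefl
  rw [show (1:ℝ)/2 * Real.Gamma (5/6) * Real.Gamma (1/6)
      = (Real.Gamma (1/6) * Real.Gamma (5/6)) / 2 by ring, hrefl]
  ring

lemma inner_cos (u M : ℝ) :
    ∫ x in (0:ℝ)..M, rexp (-(u*x)) * Real.cos x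
      = (rexp (-(u*M)) * (Real.sin M - u * Real.cos M) + u) / (1 + u^2) := by
  have hne : (1 + u^2 : ℝ) ≠ 0 := by positivity
  have key : ∀ x : ℝ, HasDerivAt (fun y => rexp (-(u*y)) * (Real.sin y - u * Real.cos y) / (1+u^2))
      (rexp (-(u*x)) * Real.cos x) x := by
    intro x
    have h1 : HasDerivAt (fun y : ℝ => -(u*y)) (-u) x := by
      exact (((hasDerivAt_id x).const_mul u).neg).congr_deriv (by simp)
    have h2 : HasDerivAt (fun y : ℝ => rexp (-(u*y))) (rexp (-(u*x)) * -u) x := h1.exp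
    have h3 : HasDerivAt (fun y : ℝ => Real.sin y - u * Real.cos y)
        (Real.cos x + u * Real.sin x) x := by
      have := (Real.hasDerivAt_sin x).sub ((Real.hasDerivAt_cos x).const_mul u)
      exact this.congr_deriv (by ring)
    have h4 := (h2.mul h3).div_const (1 + u^2)
    refine h4.congr_deriv ?_
    field_simp
    ring
  rw [intervalIntegral.integral_eq_sub_of_hasDerivAt (fun x _ => key x)
    (by apply Continuous.intervalIntegrable; fun_prop)]
  simp [Real.sin_zero, Real.cos_zero]
  ring

lemma int_kernel {x : ℝ} (hx : 0 < x) :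
    IntegrableOn (fun u : ℝ => u ^ (-1/3 : ℝ) * rexp (-(x*u))) (Ioi 0) := by
  have := integrableOn_rpow_mul_exp_neg_mul_rpow (p := 1) (s := -1/3) (b := x)
    (by norm_num) one_pos hx
  apply this.congr_fun ?_ measurableSet_Ioi
  intro u hu
  simp only [Real.rpow_one]
  ring_nf

lemma kernel_val {x : ℝ} (hx : 0 < x) :
    ∫ u in Ioi (0:ℝ), u ^ (-1/3 : ℝ) * rexp (-(x*u)) = x ^ (-2/3 : ℝ) * Real.Gamma (2/3) := by
  have h := integral_rpow_mul_exp_neg_mul_Ioi (a := 2/3) (by norm_num) hx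
  rw [show (2:ℝ)/3 - 1 = -1/3 by norm_num] at h
  rw [h, one_div, Real.inv_rpow hx.le, ← Real.rpow_neg hx.le]
  norm_num

lemma fubini_M {M : ℝ} (hM : 0 < M) :
    ∫ x in Ioc (0:ℝ) M, x ^ (-2/3 : ℝ) * Real.cos x
      = (1 / Real.Gamma (2/3)) * ∫ u in Ioi (0:ℝ),
          u ^ (-1/3 : ℝ) * ((rexp (-(u*M)) * (Real.sin M - u * Real.cos M) + u) / (1 + u^2)) := by
  set ν := volume.restrict (Ioc (0:ℝ) M) with hν
  set μ := volume.restrict (Ioi (0:ℝ)) with hμ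
  set f : ℝ → ℝ → ℝ := fun x u => u ^ (-1/3 : ℝ) * rexp (-(u*x)) * Real.cos x with hf
  have hΓpos : 0 < Real.Gamma (2/3) := Real.Gamma_pos_of_pos (by norm_num)
  have hmeas : AEStronglyMeasurable (Function.uncurry f) (ν.prod μ) := by
    apply Measurable.aestronglyMeasurable; fun_prop
  have hint_u : ∀ x : ℝ, 0 < x → Integrable (fun u => f x u) μ := by
    intro x hx
    apply ((int_kernel hx).congr_fun (fun u _ => by beta_reduce; rw [mul_comm x u])
      measurableSet_Ioi).mul_const
  have hinner : ∀ x : ℝ, 0 < x →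
      ∫ u, f x u ∂μ = (x ^ (-2/3 : ℝ) * Real.Gamma (2/3)) * Real.cos x := by
    intro x hx
    have : ∀ u : ℝ, f x u = (u ^ (-1/3 : ℝ) * rexp (-(x*u))) * Real.cos x := by
      intro u; simp only [hf]; ring_nf
    simp only [this]
    rw [MeasureTheory.integral_mul_const, kernel_val hx]
  have hintf : Integrable (Function.uncurry f) (ν.prod μ) := by
    rw [MeasureTheory.integrable_prod_iff hmeas]
    constructor
    · filter_upwards [ae_restrict_mem measurableSet_Ioc] with x hx
      exact hint_u x hx.1
    · have hbound : IntegrableOn (fun x : ℝ => x ^ (-2/3 : ℝ) * Real.Gamma (2/3)) (Ioc 0 M) := by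
        rw [← intervalIntegrable_iff_integrableOn_Ioc_of_le hM.le]
        exact (intervalIntegral.intervalIntegrable_rpow' (by norm_num)).mul_const _
      apply Integrable.mono' hbound
      · exact hmeas.norm.integral_prod_right'
      · filter_upwards [ae_restrict_mem measurableSet_Ioc] with x hx
        simp only [Function.uncurry_apply_pair]
        have hx0 := hx.1
        have heq : ∀ u : ℝ, 0 < u → ‖f x u‖ = (u ^ (-1/3 : ℝ) * rexp (-(x*u))) * |Real.cos x| := by
          intro u hu
          simp only [hf, Real.norm_eq_abs, abs_mul, abs_of_nonneg (Real.rpow_nonneg hu.le _),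
            abs_of_nonneg (Real.exp_nonneg _)]
          ring_nf
        rw [Real.norm_eq_abs, abs_of_nonneg (by positivity : (0:ℝ) ≤ ∫ u, ‖f x u‖ ∂μ)]
        have : ∫ u, ‖f x u‖ ∂μ = (x ^ (-2/3 : ℝ) * Real.Gamma (2/3)) * |Real.cos x| := by
          rw [hμ, setIntegral_congr_fun measurableSet_Ioi (fun u hu => heq u hu),
            MeasureTheory.integral_mul_const, kernel_val hx0]
        rw [this]
        have : |Real.cos x| ≤ 1 := Real.abs_cos_le_one x
        nlinarith [Real.rpow_nonneg hx0.le (-2/3 : ℝ), mul_nonneg (Real.rpow_nonneg hx0.le (-2/3:ℝ)) hΓpos.le]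
  have hswap := MeasureTheory.integral_integral_swap hintf
  have hL : ∫ x, ∫ u, f x u ∂μ ∂ν
      = Real.Gamma (2/3) * ∫ x in Ioc (0:ℝ) M, x ^ (-2/3 : ℝ) * Real.cos x := by
    rw [hν, ← MeasureTheory.integral_const_mul]
    exact setIntegral_congr_fun measurableSet_Ioc
      (fun x hx => by rw [hinner x hx.1]; ring)
  have hR : ∫ u, ∫ x, f x u ∂ν ∂μ = ∫ u in Ioi (0:ℝ),
      u ^ (-1/3 : ℝ) * ((rexp (-(u*M)) * (Real.sin M - u * Real.cos M) + u) / (1 + u^2)) := by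
    rw [hμ]
    apply setIntegral_congr_fun measurableSet_Ioi
    intro u hu
    beta_reduce
    have h1 : ∫ x, f x u ∂ν = u ^ (-1/3:ℝ) * ∫ x in Ioc (0:ℝ) M, rexp (-(u*x)) * Real.cos x := by
      rw [hν, ← MeasureTheory.integral_const_mul]
      exact setIntegral_congr_fun measurableSet_Ioc (fun x hx => by simp only [hf]; ring)
    rw [h1, ← intervalIntegral.integral_of_le hM.le, inner_cos]
  rw [hL, hR] at hswap
  rw [← hswap]
  field_simp
  rfl

noncomputable def Efun (M : ℝ) : ℝ :=
  ∫ u in Ioi (0:ℝ), u ^ (-1/3 : ℝ) * (rexp (-(u*M)) * (Real.sin M - u * Real.cos M) / (1 + u^2))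

lemma E_bound {M : ℝ} (u : ℝ) (hu : 0 < u) :
    ‖u ^ (-1/3 : ℝ) * (rexp (-(u*M)) * (Real.sin M - u * Real.cos M) / (1 + u^2))‖
      ≤ 2 * (u ^ (-1/3 : ℝ) * rexp (-(M*u))) := by
  have hd : (0:ℝ) < 1 + u^2 := by positivity
  rw [Real.norm_eq_abs, abs_mul, abs_div, abs_mul, abs_of_nonneg (Real.rpow_nonneg hu.le _),
    abs_of_nonneg (Real.exp_nonneg _), abs_of_pos hd]
  have h1 : |Real.sin M - u * Real.cos M| ≤ 1 + u := by
    calc |Real.sin M - u * Real.cos M| ≤ |Real.sin M| + |u * Real.cos M| := abs_sub _ _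
      _ ≤ 1 + u := by
        rw [abs_mul, abs_of_pos hu]
        have := Real.abs_sin_le_one M
        have := Real.abs_cos_le_one M
        nlinarith
  calc u ^ (-1/3:ℝ) * (rexp (-(u*M)) * |Real.sin M - u * Real.cos M| / (1 + u^2))
      ≤ u ^ (-1/3:ℝ) * (rexp (-(u*M)) * (1+u) / (1 + u^2)) := by
        gcongr
    _ = (u ^ (-1/3:ℝ) * rexp (-(u*M))) * ((1+u) / (1 + u^2)) := by ring
    _ ≤ (u ^ (-1/3:ℝ) * rexp (-(u*M))) * 2 := by
        apply mul_le_mul_of_nonneg_left ?_ (mul_nonneg (Real.rpow_nonneg hu.le _) (Real.exp_nonneg _))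
        rw [div_le_iff₀ hd]
        nlinarith
    _ = 2 * (u ^ (-1/3:ℝ) * rexp (-(M*u))) := by rw [mul_comm M u]; ring

lemma E_integrand_integrable {M : ℝ} (hM : 0 < M) :
    IntegrableOn (fun u : ℝ =>
      u ^ (-1/3 : ℝ) * (rexp (-(u*M)) * (Real.sin M - u * Real.cos M) / (1 + u^2))) (Ioi 0) := by
  refine Integrable.mono' (((int_kernel hM).const_mul 2)) ?_ ?_
  · apply Measurable.aestronglyMeasurable; fun_prop
  · filter_upwards [ae_restrict_mem measurableSet_Ioi] with u hu
    exact E_bound u hu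

lemma E_tendsto : Tendsto Efun atTop (nhds 0) := by
  have hΓpos : 0 < Real.Gamma (2/3) := Real.Gamma_pos_of_pos (by norm_num)
  apply squeeze_zero_norm' (a := fun M => 2 * (M ^ (-2/3:ℝ) * Real.Gamma (2/3)))
  · filter_upwards [eventually_gt_atTop (0:ℝ)] with M hM
    have hb : ∀ᵐ u ∂(volume.restrict (Ioi (0:ℝ))),
        ‖u ^ (-1/3 : ℝ) * (rexp (-(u*M)) * (Real.sin M - u * Real.cos M) / (1 + u^2))‖
          ≤ 2 * (u ^ (-1/3 : ℝ) * rexp (-(M*u))) := by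
      filter_upwards [ae_restrict_mem measurableSet_Ioi] with u hu
      exact E_bound u hu
    have h := MeasureTheory.norm_integral_le_of_norm_le ((int_kernel hM).const_mul 2) hb
    rw [MeasureTheory.integral_const_mul, kernel_val hM] at h
    exact h
  · have h0 : Tendsto (fun M : ℝ => M ^ (-(2/3):ℝ)) atTop (nhds 0) :=
      tendsto_rpow_neg_atTop (by norm_num)
    have := (h0.mul_const (Real.Gamma (2/3))).const_mul 2
    simp only [zero_mul, mul_zero] at this
    convert this using 2
    norm_num

lemma tendsto_main :
    Tendsto (fun M : ℝ => ∫ x in Ioc (0:ℝ) M, x ^ (-2/3 : ℝ) * Real.cos x) atTop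
      (nhds (π / Real.Gamma (2/3))) := by
  have hΓpos : 0 < Real.Gamma (2/3) := Real.Gamma_pos_of_pos (by norm_num)
  have hsplit : ∀ M : ℝ, 0 < M →
      ∫ x in Ioc (0:ℝ) M, x ^ (-2/3 : ℝ) * Real.cos x
        = (1 / Real.Gamma (2/3)) * (Efun M + π) := by
    intro M hM
    rw [fubini_M hM]
    congr 1
    have hpt : ∀ u : ℝ, u ∈ Ioi (0:ℝ) →
        u ^ (-1/3 : ℝ) * ((rexp (-(u*M)) * (Real.sin M - u * Real.cos M) + u) / (1 + u^2))
          = u ^ (-1/3 : ℝ) * (rexp (-(u*M)) * (Real.sin M - u * Real.cos M) / (1 + u^2))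
            + u ^ (2/3:ℝ) / (1 + u^2) := by
      intro u hu
      have hu0 : (0:ℝ) < u := hu
      have h23 : u ^ (2/3:ℝ) = u ^ (-1/3:ℝ) * u := by
        rw [show (2:ℝ)/3 = -1/3 + 1 by norm_num, Real.rpow_add hu0, Real.rpow_one]
      rw [h23]
      field_simp
    rw [setIntegral_congr_fun measurableSet_Ioi hpt,
      MeasureTheory.integral_add (E_integrand_integrable hM) int_K, K_val]
    rfl
  have h1 : Tendsto (fun M : ℝ => (1 / Real.Gamma (2/3)) * (Efun M + π)) atTop
      (nhds ((1 / Real.Gamma (2/3)) * (0 + π))) :=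
    ((E_tendsto.add_const π).const_mul _)
  have h2 : (1 / Real.Gamma (2/3)) * (0 + π) = π / Real.Gamma (2/3) := by ring
  rw [h2] at h1
  apply h1.congr'
  filter_upwards [eventually_gt_atTop (0:ℝ)] with M hM
  exact (hsplit M hM).symm

lemma subst_cube {R : ℝ} (hR : 0 < R) :
    ∫ x in Ioc (0:ℝ) (R^3), x ^ (-2/3 : ℝ) * Real.cos x
      = 3 * ∫ t in (0:ℝ)..R, Real.cos (t^3) := by
  have himg : (fun t : ℝ => t^3) '' Ioc 0 R = Ioc 0 (R^3) := by
    ext y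
    simp only [mem_image, mem_Ioc]
    constructor
    · rintro ⟨t, ⟨ht0, htR⟩, rfl⟩
      exact ⟨by positivity, pow_le_pow_left₀ ht0.le htR 3⟩
    · rintro ⟨hy0, hyR⟩
      refine ⟨y ^ ((1:ℝ)/3), ⟨Real.rpow_pos_of_pos hy0 _, ?_⟩, ?_⟩
      · have := Real.rpow_le_rpow hy0.le hyR (by norm_num : (0:ℝ) ≤ 1/3)
        calc y ^ ((1:ℝ)/3) ≤ (R^3) ^ ((1:ℝ)/3) := this
          _ = R := by
            rw [← Real.rpow_natCast R 3, ← Real.rpow_mul hR.le]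
            norm_num
      · rw [← Real.rpow_natCast (y ^ ((1:ℝ)/3)) 3, ← Real.rpow_mul hy0.le]
        norm_num
  have hderiv : ∀ t ∈ Ioc (0:ℝ) R, HasDerivWithinAt (fun t : ℝ => t^3) (3*t^2) (Ioc 0 R) t := by
    intro t _
    have := hasDerivAt_pow 3 t
    norm_num at this
    exact this.hasDerivWithinAt
  have hinj : InjOn (fun t : ℝ => t^3) (Ioc 0 R) :=
    ((Odd.strictMono_pow (by decide)).injective.injOn)
  have h := MeasureTheory.integral_image_eq_integral_abs_deriv_smul measurableSet_Ioc hderiv hinj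
    (fun x => x ^ (-2/3 : ℝ) * Real.cos x)
  rw [himg] at h
  rw [h]
  have hpt : ∀ t ∈ Ioc (0:ℝ) R,
      |3*t^2| • ((t^3) ^ (-2/3 : ℝ) * Real.cos (t^3)) = 3 * Real.cos (t^3) := by
    intro t ht
    have ht0 : (0:ℝ) < t := ht.1
    have h1 : (t^3 : ℝ) ^ (-2/3 : ℝ) = t ^ (-2 : ℝ) := by
      rw [← Real.rpow_natCast t 3, ← Real.rpow_mul ht0.le]
      norm_num
    rw [smul_eq_mul, h1, abs_of_nonneg (by positivity), Real.rpow_neg ht0.le,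
      Real.rpow_two]
    field_simp
  rw [setIntegral_congr_fun measurableSet_Ioc hpt, ← intervalIntegral.integral_of_le hR.le,
    intervalIntegral.integral_const_mul]

lemma tendsto_cos_cube :
    Tendsto (fun R : ℝ => ∫ t in (0:ℝ)..R, Real.cos (t^3)) atTop
      (nhds (π / (3 * Real.Gamma (2/3)))) := by
  have hcomp : Tendsto (fun R : ℝ => ∫ x in Ioc (0:ℝ) (R^3), x ^ (-2/3 : ℝ) * Real.cos x) atTop
      (nhds (π / Real.Gamma (2/3))) :=
    tendsto_main.comp (tendsto_pow_atTop (by norm_num : 3 ≠ 0))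
  have h1 := hcomp.const_mul (1/3 : ℝ)
  have h2 : (1/3 : ℝ) * (π / Real.Gamma (2/3)) = π / (3 * Real.Gamma (2/3)) := by ring
  rw [h2] at h1
  apply h1.congr'
  filter_upwards [eventually_gt_atTop (0:ℝ)] with R hR
  rw [subst_cube hR]
  ring

/-- The Airy function `A(x) = (1/2π) ∫_ℝ e^{ixξ} e^{iξ³} dξ`, interpreted as an
improper (oscillatory) integral, satisfies `A(0) = 1/(3 Γ(2/3))`: the symmetric
truncated integrals `(1/2π) ∫_{−R}^R e^{iξ³} dξ` converge to `1/(3 Γ(2/3))`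
as `R → ∞`. -/
theorem stmt_14 :
    Tendsto
      (fun R : ℝ =>
        (1 / (2 * Real.pi) : ℂ) * ∫ ξ in (-R)..R, Complex.exp (Complex.I * (ξ:ℂ) ^ 3))
      atTop
      (nhds ((1 / (3 * Real.Gamma (2 / 3)) : ℝ) : ℂ)) := by
  have hΓpos : 0 < Real.Gamma (2/3) := Real.Gamma_pos_of_pos (by norm_num)
  have hcont : Continuous (fun ξ : ℝ => Complex.exp (Complex.I * (ξ:ℂ)^3)) := by fun_prop
  have hkey : ∀ R : ℝ,
      (1 / (2 * Real.pi) : ℂ) * ∫ ξ in (-R)..R, Complex.exp (Complex.I * (ξ:ℂ) ^ 3)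
        = (((1/π) * ∫ t in (0:ℝ)..R, Real.cos (t^3) : ℝ) : ℂ) := by
    intro R
    have hsplit : ∫ ξ in (-R)..R, Complex.exp (Complex.I * (ξ:ℂ)^3)
        = (∫ ξ in (-R)..(0:ℝ), Complex.exp (Complex.I * (ξ:ℂ)^3))
          + ∫ ξ in (0:ℝ)..R, Complex.exp (Complex.I * (ξ:ℂ)^3) :=
      (intervalIntegral.integral_add_adjacent_intervals
        (hcont.intervalIntegrable _ _) (hcont.intervalIntegrable _ _)).symm
    have hneg : ∫ ξ in (-R)..(0:ℝ), Complex.exp (Complex.I * (ξ:ℂ)^3)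
        = ∫ ξ in (0:ℝ)..R, Complex.exp (-(Complex.I * (ξ:ℂ)^3)) := by
      have h1 := intervalIntegral.integral_comp_neg
        (a := (0:ℝ)) (b := R) (fun ξ : ℝ => Complex.exp (Complex.I * (ξ:ℂ)^3))
      rw [neg_zero] at h1
      rw [← h1]
      apply intervalIntegral.integral_congr
      intro x _
      push_cast
      ring_nf
    have hcos : ∀ x : ℝ, Complex.exp (-(Complex.I * (x:ℂ)^3)) + Complex.exp (Complex.I * (x:ℂ)^3)
        = ((2 * Real.cos (x^3) : ℝ) : ℂ) := by
      intro x
      push_cast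
      rw [Complex.two_cos]
      ring_nf
    have hsum : (∫ ξ in (0:ℝ)..R, Complex.exp (-(Complex.I * (ξ:ℂ)^3)))
          + ∫ ξ in (0:ℝ)..R, Complex.exp (Complex.I * (ξ:ℂ)^3)
        = ((2 * ∫ t in (0:ℝ)..R, Real.cos (t^3) : ℝ) : ℂ) := by
      rw [← intervalIntegral.integral_add
        ((Continuous.intervalIntegrable (by fun_prop) _ _))
        (hcont.intervalIntegrable _ _)]
      rw [show ((2 * ∫ t in (0:ℝ)..R, Real.cos (t^3) : ℝ) : ℂ)
          = ∫ t in (0:ℝ)..R, ((2 * Real.cos (t^3) : ℝ) : ℂ) by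
        rw [intervalIntegral.integral_ofReal, ← intervalIntegral.integral_const_mul]]
      exact intervalIntegral.integral_congr (fun x _ => hcos x)
    rw [hsplit, hneg, hsum]
    have hπ : (Real.pi : ℂ) ≠ 0 := by
      exact_mod_cast Complex.ofReal_ne_zero.mpr Real.pi_ne_zero
    push_cast
    field_simp
  have hreal : Tendsto (fun R : ℝ => (1/π) * ∫ t in (0:ℝ)..R, Real.cos (t^3)) atTop
      (nhds (1 / (3 * Real.Gamma (2/3)))) := by
    have := tendsto_cos_cube.const_mul (1/π : ℝ)
    have heq : (1/π : ℝ) * (π / (3 * Real.Gamma (2/3))) = 1 / (3 * Real.Gamma (2/3)) := by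
      field_simp
    rwa [heq] at this
  have := hreal.ofReal
  simp only [← hkey] at this
  exact this
end
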